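/- arXiv:2304.01998 — 4 statements merged into one kernel-verified Lean document; each statement's English description precedes it below -/
import Mathlib

section
/- For every n ≥ 1 and every I ⊆ {1,…,n}, D_I = Σ_T (−1)^{|T|} · (n+1)! / ∏_{B ∈ T} (|B|+1)!, where the sum ranges over all sets T of contiguous blocks of I (including the empty set and the set of all blocks of I). -/
noncomputable section

open scoped Classical

/-- `B` is a contiguous block of `I ⊆ {1, …, n}` (subsets of `{1, …, n}` are modelled
as `Finset (Fin n)`): a maximal subset of `I` consisting of consecutive integers. -/
def IsBlock {n : ℕ} (I B : Finset (Fin n)) : Prop :=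
  ∃ a b : Fin n, a ≤ b ∧ B = Finset.Icc a b ∧ B ⊆ I ∧
    (∀ c : Fin n, (c : ℕ) + 1 = (a : ℕ) → c ∉ I) ∧
    (∀ c : Fin n, (b : ℕ) + 1 = (c : ℕ) → c ∉ I)

/-- The set of contiguous blocks of `I`. -/
noncomputable def blocksOf {n : ℕ} (I : Finset (Fin n)) : Finset (Finset (Fin n)) :=
  I.powerset.filter (fun B => IsBlock I B)

/-- `n_i(I)`: the number of contiguous blocks of `I` of size `i`. -/
noncomputable def nBlocks {n : ℕ} (I : Finset (Fin n)) (i : ℕ) : ℕ :=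
  ((blocksOf I).filter (fun B => B.card = i)).card

/-- `N_I = (n+1 − Σ_i (i+1)·n_i(I))! · ∏_i ( n_i(I)! · ((i+1)!)^{n_i(I)} )`. -/
noncomputable def NIval {n : ℕ} (I : Finset (Fin n)) : ℕ :=
  Nat.factorial (n + 1 - ∑ i ∈ Finset.range (n + 1), (i + 1) * nBlocks I i) *
    ∏ i ∈ Finset.range (n + 1),
      Nat.factorial (nBlocks I i) * Nat.factorial (i + 1) ^ nBlocks I i

/-- `j` is a descent of the permutation `w` of `{1, …, n+1}` (positions are indexed
by `Fin (n+1)`, the simple reflections `s_1, …, s_n` by `Fin n`):  `w(j) > w(j+1)`. -/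
def IsDescent {n : ℕ} (w : Equiv.Perm (Fin (n + 1))) (j : Fin n) : Prop :=
  w j.succ < w j.castSucc

/-- `D_I`: the number of permutations `w` of `{1, …, n+1}` such that every
contiguous block of `I` contains a descent of `w`. -/
noncomputable def DIval {n : ℕ} (I : Finset (Fin n)) : ℕ :=
  (Finset.univ.filter (fun w : Equiv.Perm (Fin (n + 1)) =>
    ∀ B ∈ blocksOf I, ∃ j ∈ B, IsDescent w j)).card

/-!
By inclusion–exclusion over the blocks, `D_I = ∑_T (-1)^|T| · N_T`, where `N_T` counts the
permutations with no descent in any block of `T`. Having no descent in the block `B = [a, b]` means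
being increasing on the positions `[a, b + 1]`, a set of `|B| + 1` positions; these sets are
pairwise disjoint because distinct blocks are separated by a gap of `I`. Right multiplication by
the permutations of such a set `R` splits the permutations of `{1, …, n + 1}` into classes of
size `|R|!`, each containing exactly one permutation increasing on `R` (its sorted
representative). Applying this to each block of `T` in turn gives `N_T = (n+1)! / ∏ (|B|+1)!`.
-/

open Equiv Finset
open scoped Nat

namespace Equiv.Perm

variable {α : Type*} [LinearOrder α]

def sortingPerm (u : Perm α) (R : Finset α) : Perm R :=
  ((R.orderIsoOfFin rfl).symm.trans
      ((R.image u).orderIsoOfFin (card_image_of_injective R u.injective))).toEquiv.trans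
    (u.subtypeEquiv fun _ => u.injective.mem_finset_image.symm).symm

theorem strictMonoOn_mul_ofSubtype_sortingPerm (u : Perm α) (R : Finset α) :
    StrictMonoOn ⇑(u * ofSubtype (sortingPerm u R)) R := by
  intro x hx y hy hxy
  simpa [mul_apply, ofSubtype_apply_of_mem _ hx, ofSubtype_apply_of_mem _ hy, sortingPerm]
    using hxy

theorem eq_one_of_strictMonoOn_mul_ofSubtype {w : Perm α} {R : Finset α} {τ : Perm R}
    (hw : StrictMonoOn ⇑w R) (hτ : StrictMonoOn ⇑(w * ofSubtype τ) R) : τ = 1 := by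
  have hmono : StrictMono τ := fun x y hxy => by
    have hwτ := hτ x.2 y.2 hxy
    simp only [mul_apply, ofSubtype_apply_of_mem _ x.2, ofSubtype_apply_of_mem _ y.2] at hwτ
    exact (hw.lt_iff_lt (τ x).2 (τ y).2).1 hwτ
  exact Equiv.ext (congrFun hmono.eq_id)

def strictMonoOnProdPermEquiv (R : Finset α) (Q : Perm α → Prop)
    (hQ : ∀ (w : Perm α) (σ : Perm R), Q (w * ofSubtype σ) ↔ Q w) :
    {w : Perm α // Q w ∧ StrictMonoOn ⇑w R} × Perm R ≃ {w : Perm α // Q w} where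
  toFun p := ⟨p.1.1 * ofSubtype p.2, (hQ _ _).2 p.1.2.1⟩
  invFun u := (⟨u.1 * ofSubtype (sortingPerm u.1 R),
    (hQ _ _).2 u.2, strictMonoOn_mul_ofSubtype_sortingPerm u.1 R⟩, (sortingPerm u.1 R)⁻¹)
  left_inv := by
    rintro ⟨⟨w, -, hw⟩, σ⟩
    have hsort : sortingPerm (w * ofSubtype σ) R = σ⁻¹ := by
      refine eq_inv_of_mul_eq_one_right (eq_one_of_strictMonoOn_mul_ofSubtype hw ?_)
      simpa only [map_mul, mul_assoc] using
        strictMonoOn_mul_ofSubtype_sortingPerm (w * ofSubtype σ) R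
    simp [hsort, mul_assoc]
  right_inv u := by simp [mul_assoc]

theorem card_filter_strictMonoOn_mul_factorial [Fintype α] (R : Finset α) (Q : Perm α → Prop)
    (hQ : ∀ (w : Perm α) (σ : Perm R), Q (w * ofSubtype σ) ↔ Q w) :
    #{w | Q w ∧ StrictMonoOn ⇑w R} * (#R)! = #{w | Q w} := by
  simpa [Fintype.card_subtype, Fintype.card_perm] using
    Fintype.card_congr (strictMonoOnProdPermEquiv R Q hQ)

theorem card_filter_forall_strictMonoOn_mul_prod_factorial [Fintype α] {ι : Type*}
    (T : Finset ι) (S : ι → Finset α) (hS : (T : Set ι).PairwiseDisjoint S) :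
    #{w : Perm α | ∀ i ∈ T, StrictMonoOn ⇑w (S i)} * ∏ i ∈ T, (#(S i))! =
      (Fintype.card α)! := by
  induction T using Finset.induction_on with
  | empty => simp [Fintype.card_perm]
  | insert i T hi ih =>
    rw [coe_insert, Set.pairwiseDisjoint_insert_of_notMem (mem_coe.not.2 hi)] at hS
    have hQ (w : Perm α) (σ : Perm (S i)) :
        (∀ j ∈ T, StrictMonoOn ⇑(w * ofSubtype σ) (S j)) ↔
          ∀ j ∈ T, StrictMonoOn ⇑w (S j) := by
      refine forall₂_congr fun j hj => ⟨fun h => h.congr ?_, fun h => h.congr ?_⟩ <;>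
      · intro x hx
        have hxi : x ∉ S i := disjoint_right.1 (hS.2 j hj) hx
        simp [ofSubtype_apply_of_not_mem σ hxi]
    have hfilter : #{w : Perm α | ∀ j ∈ insert i T, StrictMonoOn ⇑w (S j)} =
        #{w : Perm α | (∀ j ∈ T, StrictMonoOn ⇑w (S j)) ∧ StrictMonoOn ⇑w (S i)} := by
      simp only [forall_mem_insert, and_comm]
    rw [prod_insert hi, hfilter, ← mul_assoc, ← ih hS.1]
    congr 1
    convert card_filter_strictMonoOn_mul_factorial (S i)
      (fun w => ∀ j ∈ T, StrictMonoOn ⇑w (S j)) hQ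

end Equiv.Perm

namespace Fin

variable {n : ℕ} {β : Type*} [Preorder β]

theorem strictMonoOn_Icc_iff_lt_succ {f : Fin (n + 1) → β} {a b : Fin n} :
    StrictMonoOn f (Icc a.castSucc b.succ) ↔ ∀ j ∈ Icc a b, f j.castSucc < f j.succ := by
  refine ⟨fun h j hj => ?_, fun h => ?_⟩
  · simp only [mem_Icc, Fin.le_def] at hj
    refine h ?_ ?_ castSucc_lt_succ <;>
      simp only [coe_Icc, Set.mem_Icc, Fin.le_def, val_castSucc, val_succ] <;> omega
  · refine strictMonoOn_of_lt_succ (by simpa using Set.ordConnected_Icc) fun x hx hxI hsxI => ?_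
    have hx : x ≠ last n := fun hlast => hx (hlast ▸ fun y _ => le_last y)
    obtain ⟨j, rfl⟩ := exists_castSucc_eq.2 hx
    rw [orderSucc_castSucc] at hsxI ⊢
    simp only [coe_Icc, Set.mem_Icc, castSucc_le_castSucc_iff, succ_le_succ_iff] at hxI hsxI
    exact h j (mem_Icc.2 ⟨hxI.1, hsxI.2⟩)

end Fin

section Blocks

variable {n : ℕ}

def blockRun (B : Finset (Fin n)) : Finset (Fin (n + 1)) :=
  B.image Fin.castSucc ∪ B.image Fin.succ

theorem blockRun_Icc {a b : Fin n} (hab : a ≤ b) :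
    blockRun (Icc a b) = Icc a.castSucc b.succ := by
  ext x
  simp only [blockRun, mem_union, mem_image, mem_Icc, Fin.le_def, Fin.ext_iff, Fin.exists_iff,
    Fin.val_castSucc, Fin.val_succ, exists_prop]
  rw [Fin.le_def] at hab
  constructor
  · rintro (⟨i, -, ⟨h1, h2⟩, hi⟩ | ⟨i, -, ⟨h1, h2⟩, hi⟩) <;> omega
  · rintro ⟨h1, h2⟩
    by_cases hx : (x : ℕ) ≤ b
    · exact Or.inl ⟨x, by omega, ⟨h1, hx⟩, rfl⟩
    · exact Or.inr ⟨b, b.isLt, ⟨hab, le_rfl⟩, by omega⟩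

theorem card_blockRun_Icc {a b : Fin n} (hab : a ≤ b) :
    #(blockRun (Icc a b)) = #(Icc a b) + 1 := by
  rw [Fin.le_def] at hab
  simp only [blockRun_Icc hab, Fin.card_Icc, Fin.val_succ, Fin.val_castSucc]
  omega

theorem not_isDescent_iff (w : Perm (Fin (n + 1))) (j : Fin n) :
    ¬IsDescent w j ↔ w j.castSucc < w j.succ :=
  not_lt.trans (w.injective.ne Fin.castSucc_lt_succ.ne).le_iff_lt

theorem IsBlock.forall_not_isDescent_iff {I B : Finset (Fin n)} (hB : IsBlock I B)
    (w : Perm (Fin (n + 1))) :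
    (∀ j ∈ B, ¬IsDescent w j) ↔ StrictMonoOn w (blockRun B) := by
  obtain ⟨a, b, hab, rfl, -⟩ := hB
  simp only [not_isDescent_iff, blockRun_Icc hab, Fin.strictMonoOn_Icc_iff_lt_succ]

theorem IsBlock.card_blockRun {I B : Finset (Fin n)} (hB : IsBlock I B) :
    #(blockRun B) = #B + 1 := by
  obtain ⟨a, b, hab, rfl, -⟩ := hB
  exact card_blockRun_Icc hab

theorem IsBlock.subset_of_not_disjoint {I B B' : Finset (Fin n)} (hB : IsBlock I B)
    (hB' : IsBlock I B') (h : ¬Disjoint (blockRun B) (blockRun B')) : B ⊆ B' := by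
  obtain ⟨a, b, hab, rfl, hBI, -⟩ := hB
  obtain ⟨a', b', hab', rfl, -, hl', hr'⟩ := hB'
  rw [blockRun_Icc hab, blockRun_Icc hab', not_disjoint_iff] at h
  obtain ⟨x, hx, hx'⟩ := h
  simp only [mem_Icc, Fin.le_def, Fin.val_castSucc, Fin.val_succ] at hx hx'
  -- Otherwise the position just before `a'` (resp. after `b'`) lies in `B ⊆ I`, against the
  -- maximality of `B'`.
  have ha : a' ≤ a := by
    by_contra! hlt
    rw [Fin.lt_def] at hlt
    exact hl' ⟨a' - 1, by omega⟩ (by dsimp only; omega)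
      (hBI (by simp only [mem_Icc, Fin.le_def]; omega))
  have hb : b ≤ b' := by
    by_contra! hlt
    rw [Fin.lt_def] at hlt
    exact hr' ⟨b' + 1, by omega⟩ rfl (hBI (by simp only [mem_Icc, Fin.le_def]; omega))
  exact Icc_subset_Icc ha hb

theorem pairwiseDisjoint_blockRun (I : Finset (Fin n)) :
    (blocksOf I : Set (Finset (Fin n))).PairwiseDisjoint blockRun := by
  intro B hB B' hB' hne
  simp only [blocksOf, mem_coe, mem_filter] at hB hB'
  by_contra h
  exact hne ((hB.2.subset_of_not_disjoint hB'.2 h).antisymm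
    (hB'.2.subset_of_not_disjoint hB.2 fun h' => h h'.symm))

theorem card_filter_forall_not_isDescent {I : Finset (Fin n)} {T : Finset (Finset (Fin n))}
    (hT : T ⊆ blocksOf I) :
    #{w : Perm (Fin (n + 1)) | ∀ B ∈ T, ∀ j ∈ B, ¬IsDescent w j} =
      (n + 1)! / ∏ B ∈ T, (#B + 1)! := by
  have hblock : ∀ B ∈ T, IsBlock I B := fun B hB => (mem_filter.1 (hT hB)).2
  have hcount := Perm.card_filter_forall_strictMonoOn_mul_prod_factorial T blockRun
    ((pairwiseDisjoint_blockRun I).subset (coe_subset.2 hT))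
  rw [Fintype.card_fin, prod_congr rfl fun B hB => by rw [(hblock B hB).card_blockRun]] at hcount
  rw [Nat.div_eq_of_eq_mul_left (by positivity) hcount.symm]
  congr 1
  ext w
  simp only [mem_filter, mem_univ, true_and]
  exact forall₂_congr fun B hB => (hblock B hB).forall_not_isDescent_iff w

end Blocks

theorem DI_inclusion_exclusion_general (n : ℕ) (I : Finset (Fin n)) :
    (DIval I : ℤ) =
      ∑ T ∈ (blocksOf I).powerset,
        (-1) ^ T.card *
          ((Nat.factorial (n + 1) / ∏ B ∈ T, Nat.factorial (B.card + 1) : ℕ) : ℤ) := by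
  let noDescentIn (B : Finset (Fin n)) : Finset (Perm (Fin (n + 1))) :=
    {w | ∀ j ∈ B, ¬IsDescent w j}
  have hD : DIval I = #((blocksOf I).inf fun B => (noDescentIn B)ᶜ) := by
    unfold DIval
    congr 1
    ext w
    simp [noDescentIn, mem_inf]
  rw [hD, inclusion_exclusion_card_inf_compl]
  refine sum_congr rfl fun T hT => ?_
  rw [← card_filter_forall_not_isDescent (mem_powerset.1 hT)]
  congr 3
  ext w
  simp [noDescentIn, mem_inf]

/-- `D_I = Σ_T (−1)^{|T|} · (n+1)! / ∏_{B ∈ T} (|B|+1)!`, the sum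
ranging over all sets `T` of contiguous blocks of `I`. -/
theorem DI_inclusion_exclusion (n : ℕ) (hn : 1 ≤ n) (I : Finset (Fin n)) :
    (DIval I : ℤ) =
      ∑ T ∈ (blocksOf I).powerset,
        (-1) ^ T.card *
          ((Nat.factorial (n + 1) / ∏ B ∈ T, Nat.factorial (B.card + 1) : ℕ) : ℤ) :=
  DI_inclusion_exclusion_general n I
end
end

section
/- Let n ≥ 1, let I ⊆ {1,…,n}, and let T be any set of contiguous blocks of I. Then the number of permutations w of {1,…,n+1} such that no j lying in any block of T is a descent of w (i.e. w(j) < w(j+1) for every j belonging to a block in T) equals (n+1)! / ∏_{B ∈ T} (|B|+1)!. -/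
/-!
For a block `B = [a, b]` of `I`, the positions `j, j + 1` with `j ∈ B` form the interval
`[a, b + 1]` of `{1, …, n + 1}`, of size `|B| + 1`, and `w` has no descent in `B` exactly when
`w` is increasing on it. Distinct blocks of `I` are separated by a gap, so these intervals are
pairwise disjoint. For a set `s` of positions, every permutation factors uniquely as a
permutation increasing on `s` followed by a permutation of `s` (sort the values on `s`), and
the constraints coming from the other, disjoint intervals are unaffected by permuting `s`.
So each block divides the count by `(|B| + 1)!`.
-/

noncomputable section

open scoped Classical

open Finset Nat

namespace Tuple

theorem eq_sort_of_strictMono {β : Type*} [LinearOrder β] {k : ℕ} {f : Fin k → β}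
    {σ : Equiv.Perm (Fin k)} (h : StrictMono (f ∘ σ)) : σ = sort f :=
  eq_sort_iff.2 ⟨h.monotone, fun _ _ hij he => absurd he (h hij).ne⟩

theorem strictMono_comp_sort {β : Type*} [LinearOrder β] {k : ℕ} {f : Fin k → β}
    (hf : Function.Injective f) : StrictMono (f ∘ sort f) :=
  (monotone_sort f).strictMono_of_injective (hf.comp (sort f).injective)

end Tuple

theorem Finset.strictMonoOn_iff_strictMono_orderIsoOfFin {α β : Type*} [LinearOrder α]
    [Preorder β] (s : Finset α) (f : α → β) :
    StrictMonoOn f s ↔ StrictMono fun i => f (s.orderIsoOfFin rfl i) := by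
  set e := s.orderIsoOfFin rfl
  refine ⟨fun h i j hij => h (e i).2 (e j).2 (e.strictMono hij), fun h x hx y hy hxy => ?_⟩
  simpa using h (e.symm.lt_iff_lt.2 (show (⟨x, hx⟩ : s) < ⟨y, hy⟩ from hxy))

section SortingOnSubsets

variable {α : Type*} [Fintype α] [LinearOrder α]

theorem card_filter_strictMonoOn_mul_factorial (s : Finset α) (P : Equiv.Perm α → Prop)
    [DecidablePred P]
    (hP : ∀ w τ : Equiv.Perm α, (∀ x ∉ s, τ x = x) → (P (w * τ) ↔ P w)) :
    #{w | P w ∧ StrictMonoOn w s} * (#s)! = #{w | P w} := by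
  set e := s.orderIsoOfFin rfl
  let ext : Equiv.Perm (Fin #s) →* Equiv.Perm α := Equiv.Perm.extendDomainHom e.toEquiv
  have ext_apply (σ i) : ext σ (e i) = e (σ i) := Equiv.Perm.extendDomain_apply_image ..
  have ext_inv_apply (σ i) : (ext σ)⁻¹ (e (σ i)) = e i := by
    rw [Equiv.Perm.inv_eq_iff_eq, ext_apply]
  have ext_fix (σ) : ∀ x ∉ s, ext σ x = x := fun x hx =>
    Equiv.Perm.extendDomain_apply_not_subtype _ _ hx
  let sortOf (w : Equiv.Perm α) : Equiv.Perm (Fin #s) := Tuple.sort fun i => w (e i)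
  have hfact : (#s)! = #(univ : Finset (Equiv.Perm (Fin #s))) := by
    rw [Finset.card_univ, Fintype.card_perm, Fintype.card_fin]
  rw [hfact, ← card_product]
  symm
  -- `w ↦ (w sorted on s, the sorting permutation)`, with inverse `(v, σ) ↦ v σ⁻¹`
  refine card_nbij' (fun w => (w * ext (sortOf w), sortOf w)) (fun p => p.1 * ext p.2⁻¹)
    ?_ ?_ ?_ ?_
  · intro w hw
    simp only [coe_filter, mem_univ, true_and, Set.mem_ofPred_eq, coe_product, coe_univ,
      Set.mem_prod, Set.mem_univ, and_true] at hw ⊢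
    refine ⟨(hP _ _ (ext_fix _)).2 hw, (s.strictMonoOn_iff_strictMono_orderIsoOfFin _).2 ?_⟩
    show StrictMono fun i => (w * ext (sortOf w)) (e i)
    simp only [Equiv.Perm.mul_apply, ext_apply]
    exact Tuple.strictMono_comp_sort fun i j h => e.injective (Subtype.ext (w.injective h))
  · rintro ⟨v, σ⟩ hv
    simp only [coe_filter, mem_univ, true_and, Set.mem_ofPred_eq, coe_product, coe_univ,
      Set.mem_prod, Set.mem_univ, and_true] at hv ⊢
    exact (hP _ _ (ext_fix _)).2 hv.1
  · intro w _
    simp only [mul_assoc, ← map_mul, mul_inv_cancel, map_one, mul_one]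
  · rintro ⟨v, σ⟩ hv
    simp only [coe_filter, mem_univ, true_and, Set.mem_ofPred_eq, coe_product, coe_univ,
      Set.mem_prod, Set.mem_univ, and_true] at hv
    have hsort : sortOf (v * ext σ⁻¹) = σ := by
      refine (Tuple.eq_sort_of_strictMono ?_).symm
      simp only [Function.comp_def, map_inv, Equiv.Perm.mul_apply, ext_inv_apply]
      exact (s.strictMonoOn_iff_strictMono_orderIsoOfFin v).1 hv.2
    simp only [hsort, mul_assoc, ← map_mul, inv_mul_cancel, map_one, mul_one]

theorem card_filter_forall_strictMonoOn_mul_prod {ι : Type*} (T : Finset ι) (s : ι → Finset α)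
    (hs : (T : Set ι).PairwiseDisjoint s) :
    #{w : Equiv.Perm α | ∀ i ∈ T, StrictMonoOn w (s i)} * ∏ i ∈ T, (#(s i))! =
      (Fintype.card α)! := by
  induction T using Finset.induction_on with
  | empty => simp [Fintype.card_perm]
  | insert i T hi ih =>
    have hsT : (T : Set ι).PairwiseDisjoint s := hs.subset (by simp)
    have hinv (w τ : Equiv.Perm α) (hτ : ∀ x ∉ s i, τ x = x) :
        (∀ j ∈ T, StrictMonoOn (w * τ) (s j)) ↔ ∀ j ∈ T, StrictMonoOn w (s j) := by
      refine forall₂_congr fun j hj => Set.EqOn.congr_strictMonoOn fun x hx => ?_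
      have hij : Disjoint (s i) (s j) :=
        hs (mem_insert_self i T) (mem_insert_of_mem hj) (ne_of_mem_of_not_mem hj hi).symm
      simp [hτ x (disjoint_right.1 hij hx)]
    rw [prod_insert hi, ← mul_assoc, ← ih hsT,
      ← card_filter_strictMonoOn_mul_factorial (s i)
        (fun w => ∀ j ∈ T, StrictMonoOn w (s j)) hinv]
    simp only [forall_mem_insert, and_comm]

end SortingOnSubsets

theorem Fin.strictMonoOn_Icc_castSucc_succ_iff {β : Type*} [Preorder β] {n : ℕ}
    (f : Fin (n + 1) → β) (a b : Fin n) :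
    StrictMonoOn f (Icc a.castSucc b.succ) ↔ ∀ j ∈ Icc a b, f j.castSucc < f j.succ := by
  rw [coe_Icc]
  refine ⟨fun h j hj => ?_, fun h => ?_⟩
  · rw [mem_Icc, Fin.le_def, Fin.le_def] at hj
    refine h ?_ ?_ Fin.castSucc_lt_succ <;>
      simp only [Set.mem_Icc, Fin.le_def, Fin.val_castSucc, Fin.val_succ] <;> omega
  · refine strictMonoOn_of_lt_succ Set.ordConnected_Icc fun x hx hxI hsxI => ?_
    obtain ⟨j, rfl⟩ := Fin.eq_castSucc_of_ne_last (x := x)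
      (by rintro rfl; exact hx (Fin.top_eq_last n ▸ isMax_top))
    simp only [Fin.orderSucc_castSucc, Set.mem_Icc] at hsxI hxI ⊢
    exact h j (mem_Icc.2 ⟨Fin.castSucc_le_castSucc_iff.1 hxI.1, Fin.succ_le_succ_iff.1 hsxI.2⟩)

def blockSpan {n : ℕ} (B : Finset (Fin n)) : Finset (Fin (n + 1)) :=
  B.map Fin.castSuccEmb ∪ B.map (Fin.succEmb n)

theorem blockSpan_Icc {n : ℕ} {a b : Fin n} (hab : a ≤ b) :
    blockSpan (Icc a b) = Icc a.castSucc b.succ := by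
  ext x
  simp only [blockSpan, Fin.map_castSuccEmb_Icc, Fin.map_succEmb_Icc, mem_union, mem_Icc,
    Fin.le_def, Fin.val_castSucc, Fin.val_succ] at hab ⊢
  omega

theorem IsBlock.card_blockSpan {n : ℕ} {I B : Finset (Fin n)} (hB : IsBlock I B) :
    #(blockSpan B) = #B + 1 := by
  obtain ⟨a, b, hab, rfl, -⟩ := hB
  rw [blockSpan_Icc hab, Fin.card_Icc, Fin.card_Icc, Fin.val_succ, Fin.val_castSucc]
  have := Fin.le_def.1 hab
  omega

theorem IsBlock.strictMonoOn_blockSpan_iff {β : Type*} [Preorder β] {n : ℕ}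
    {I B : Finset (Fin n)} (hB : IsBlock I B) (f : Fin (n + 1) → β) :
    StrictMonoOn f (blockSpan B) ↔ ∀ j ∈ B, f j.castSucc < f j.succ := by
  obtain ⟨a, b, hab, rfl, -⟩ := hB
  rw [blockSpan_Icc hab, Fin.strictMonoOn_Icc_castSucc_succ_iff]

theorem IsBlock.eq_of_mem_of_mem {n : ℕ} {I B B' : Finset (Fin n)} (hB : IsBlock I B)
    (hB' : IsBlock I B') {j j' : Fin n} (hj : j ∈ B) (hj' : j' ∈ B')
    (h₁ : (j : ℕ) ≤ j' + 1) (h₂ : (j' : ℕ) ≤ j + 1) : B = B' := by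
  obtain ⟨a, b, -, rfl, hI, hL, hR⟩ := hB
  obtain ⟨a', b', -, rfl, hI', hL', hR'⟩ := hB'
  simp only [mem_Icc, Fin.le_def] at hj hj'
  have mem {c : ℕ} (hc : c < n) {x y : Fin n} (hx : (x : ℕ) ≤ c) (hy : c ≤ (y : ℕ))
      (hxy : Icc x y ⊆ I) : (⟨c, hc⟩ : Fin n) ∈ I :=
    hxy (mem_Icc.2 ⟨Fin.le_def.2 hx, Fin.le_def.2 hy⟩)
  have ha : (a : ℕ) = a' := by
    by_contra hne
    rcases Nat.lt_or_gt_of_ne hne with h | h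
    · exact hL' ⟨a' - 1, by omega⟩ (by simp; omega) (mem _ (by omega) (by omega) hI)
    · exact hL ⟨a - 1, by omega⟩ (by simp; omega) (mem _ (by omega) (by omega) hI')
  have hb : (b : ℕ) = b' := by
    by_contra hne
    rcases Nat.lt_or_gt_of_ne hne with h | h
    · exact hR ⟨b + 1, by omega⟩ (by simp) (mem _ (by omega) (by omega) hI')
    · exact hR' ⟨b' + 1, by omega⟩ (by simp) (mem _ (by omega) (by omega) hI)
  rw [Fin.ext ha, Fin.ext hb]

theorem pairwiseDisjoint_blockSpan {n : ℕ} (I : Finset (Fin n)) :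
    (blocksOf I : Set (Finset (Fin n))).PairwiseDisjoint blockSpan := by
  intro B hB B' hB' hne
  have hB := (mem_filter.1 hB).2
  have hB' := (mem_filter.1 hB').2
  refine disjoint_left.2 fun x hx hx' => hne ?_
  simp only [blockSpan, mem_union, mem_map, Fin.coe_castSuccEmb, Fin.coe_succEmb] at hx hx'
  obtain ⟨j, hj, rfl⟩ | ⟨j, hj, rfl⟩ := hx <;>
    obtain ⟨j', hj', h⟩ | ⟨j', hj', h⟩ := hx' <;>
    · simp only [Fin.ext_iff, Fin.val_castSucc, Fin.val_succ] at h
      exact hB.eq_of_mem_of_mem hB' hj hj' (by omega) (by omega)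

theorem card_no_descent_in_blocks_general (n : ℕ) (I : Finset (Fin n))
    (T : Finset (Finset (Fin n))) (hT : T ⊆ blocksOf I) :
    (Finset.univ.filter (fun w : Equiv.Perm (Fin (n + 1)) =>
        ∀ B ∈ T, ∀ j ∈ B, w j.castSucc < w j.succ)).card =
      Nat.factorial (n + 1) / ∏ B ∈ T, Nat.factorial (B.card + 1) := by
  have hblock (B) (hB : B ∈ T) : IsBlock I B := (mem_filter.1 (hT hB)).2
  have hcount := card_filter_forall_strictMonoOn_mul_prod T blockSpan
    ((pairwiseDisjoint_blockSpan I).subset hT)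
  rw [Fintype.card_fin, prod_congr rfl fun B hB => by rw [(hblock B hB).card_blockSpan]]
    at hcount
  rw [← hcount, Nat.mul_div_cancel _ (prod_pos fun B _ => factorial_pos _)]
  congr 1
  ext w
  simp only [mem_filter, mem_univ, true_and]
  exact forall₂_congr fun B hB => ((hblock B hB).strictMonoOn_blockSpan_iff w).symm

/-- For any set `T` of contiguous blocks of `I`, the number of
permutations `w` of `{1,…,n+1}` with `w(j) < w(j+1)` for every `j` lying in a block
of `T` equals `(n+1)! / ∏_{B ∈ T} (|B|+1)!`. -/
theorem card_no_descent_in_blocks (n : ℕ) (hn : 1 ≤ n) (I : Finset (Fin n))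
    (T : Finset (Finset (Fin n))) (hT : T ⊆ blocksOf I) :
    (Finset.univ.filter (fun w : Equiv.Perm (Fin (n + 1)) =>
        ∀ B ∈ T, ∀ j ∈ B, w j.castSucc < w j.succ)).card =
      Nat.factorial (n + 1) / ∏ B ∈ T, Nat.factorial (B.card + 1) :=
  card_no_descent_in_blocks_general n I T hT
end
end

section
/- There exists a ring automorphism σ of ℰ_n(v) such that σ(e_i) = e_i for all i, σ(g_i)·g_i = g_i·σ(g_i) = 1 for all i (i.e. σ(g_i) = g_i^{-1}), and σ is semilinear over the ℂ-algebra automorphism of ℂ(v) sending v to v^{-1}, i.e. σ(p(v)·x) = p(v^{-1})·σ(x) for every scalar p(v) ∈ ℂ(v) and every x ∈ ℰ_n(v). -/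
noncomputable section

/-- The field `K = ℂ(v)` of rational functions over `ℂ`. -/
abbrev Kv : Type := RatFunc ℂ

/-- The variable `v ∈ ℂ(v)`. -/
noncomputable def vv : Kv := RatFunc.X

/-- The generator `g_i` of the free algebra (`.inl i ↦ g_i`). -/
noncomputable def bgF (n : ℕ) (i : Fin n) : FreeAlgebra Kv (Fin n ⊕ Fin n) :=
  FreeAlgebra.ι Kv (Sum.inl i)

/-- The generator `e_i` of the free algebra (`.inr i ↦ e_i`). -/
noncomputable def beF (n : ℕ) (i : Fin n) : FreeAlgebra Kv (Fin n ⊕ Fin n) :=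
  FreeAlgebra.ι Kv (Sum.inr i)

/-- Defining relations of the (type `A_n`) generalized algebra of braids and ties
`ℰ_n(v)`, for generators `g_1, …, g_n, e_1, …, e_n` (indexed here by `Fin n`,
with `|i − j|` rendered as `Nat.dist i j`). -/
inductive BTRel (n : ℕ) :
    FreeAlgebra Kv (Fin n ⊕ Fin n) → FreeAlgebra Kv (Fin n ⊕ Fin n) → Prop
  | gg_comm (i j : Fin n) (h : 2 ≤ Nat.dist i j) :
      BTRel n (bgF n i * bgF n j) (bgF n j * bgF n i)
  | eg_comm (i j : Fin n) (h : 2 ≤ Nat.dist i j) :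
      BTRel n (beF n i * bgF n j) (bgF n j * beF n i)
  | braid (i j : Fin n) (h : Nat.dist i j = 1) :
      BTRel n (bgF n i * bgF n j * bgF n i) (bgF n j * bgF n i * bgF n j)
  | egg (i j : Fin n) (h : Nat.dist i j = 1) :
      BTRel n (beF n i * bgF n j * bgF n i) (bgF n j * bgF n i * beF n j)
  | ee_comm (i j : Fin n) :
      BTRel n (beF n i * beF n j) (beF n j * beF n i)
  | e_idem (i : Fin n) :
      BTRel n (beF n i * beF n i) (beF n i)
  | eg_same (i : Fin n) :
      BTRel n (beF n i * bgF n i) (bgF n i * beF n i)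
  | eeg₁ (i j : Fin n) (h : Nat.dist i j = 1) :
      BTRel n (beF n i * beF n j * bgF n j) (beF n i * bgF n j * beF n i)
  | eeg₂ (i j : Fin n) (h : Nat.dist i j = 1) :
      BTRel n (beF n i * bgF n j * beF n i) (bgF n j * beF n i * beF n j)
  | quad (i : Fin n) :
      BTRel n (bgF n i * bgF n i)
        (1 + (vv ^ 2 - 1) • (beF n i * (1 + bgF n i)))

/-- The generalized algebra of braids and ties `ℰ_n(v)` in type `A_n`. -/
abbrev BT (n : ℕ) := RingQuot (BTRel n)

/-- The generator `g_i` of `ℰ_n(v)`. -/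
noncomputable def bg (n : ℕ) (i : Fin n) : BT n :=
  RingQuot.mkAlgHom Kv (BTRel n) (bgF n i)

/-- The generator `e_i` of `ℰ_n(v)`. -/
noncomputable def be (n : ℕ) (i : Fin n) : BT n :=
  RingQuot.mkAlgHom Kv (BTRel n) (beF n i)

/-- The subalgebra `𝒞_n(v) ⊆ ℰ_n(v)` generated by `g_1, …, g_n`. -/
noncomputable def BTC (n : ℕ) : Subalgebra Kv (BT n) :=
  Algebra.adjoin Kv (Set.range (bg n))

/-! The quadratic relation makes `g_i` invertible, with
`g_i⁻¹ = g_i + (v⁻² - 1) e_i (1 + g_i)`, and `g_i⁻¹` satisfies the quadratic relation with `v`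
replaced by `v⁻¹`. So `p(v) ↦ p(v⁻¹)`, `g_i ↦ g_i⁻¹`, `e_i ↦ e_i` respects all defining relations:
those in which the `g`'s only enter through a word `w` (`w w' = w' w`, `e_i w = w e_j`, ...)
by inverting `w`, the two `e e g` relations by the explicit formula for `g_i⁻¹`.
The resulting semilinear endomorphism `σ` squares to the identity, since `σ(g_i⁻¹) = σ(g_i)⁻¹ = g_i`
and `v ↦ v⁻¹` is an involution of `ℂ(v)`. -/

namespace RatFunc
variable {K L : Type*} [Field K] [Field L] [Algebra K L]
open Polynomial

theorem algHom_ext {φ ψ : RatFunc K →ₐ[K] L} (h : φ X = ψ X) : φ = ψ := by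
  ext f
  rw [← num_div_denom f]
  simp only [map_div₀, ← aeval_X_left_eq_algebraMap, ← aeval_algHom_apply, h]

theorem transcendental_X_inv : Transcendental K (X⁻¹ : RatFunc K) :=
  fun h => transcendental_X (IsAlgebraic.inv_iff.mp h)

def invXHom : RatFunc K →ₐ[K] RatFunc K :=
  liftAlgHom (aeval X⁻¹) (nonZeroDivisors_le_comap_nonZeroDivisors_of_injective _
    (transcendental_iff_injective.mp transcendental_X_inv))

theorem invXHom_X : invXHom (X : RatFunc K) = X⁻¹ := by
  simp [invXHom, liftAlgHom_apply]

theorem invXHom_comp_invXHom : invXHom.comp invXHom = AlgHom.id K (RatFunc K) :=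
  algHom_ext (by simp [invXHom_X])

def invXEquiv : RatFunc K ≃ₐ[K] RatFunc K :=
  .ofAlgHom invXHom invXHom invXHom_comp_invXHom invXHom_comp_invXHom

theorem invXEquiv_X : invXEquiv (X : RatFunc K) = X⁻¹ := invXHom_X

theorem invXEquiv_invXEquiv (f : RatFunc K) : invXEquiv (invXEquiv f) = f :=
  AlgHom.congr_fun invXHom_comp_invXHom f

end RatFunc

namespace FreeAlgebra
variable {R X A : Type*} [CommSemiring R] [Semiring A]

def liftOfCentral (φ : R →+* A) (hφ : ∀ r a, φ r * a = a * φ r) (f : X → A) :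
    FreeAlgebra R X →+* A :=
  letI := φ.toAlgebra' hφ
  (lift R f).toRingHom

theorem liftOfCentral_ι (φ : R →+* A) (hφ : ∀ r a, φ r * a = a * φ r) (f : X → A) (x : X) :
    liftOfCentral φ hφ f (ι R x) = f x := by
  let := φ.toAlgebra' hφ
  exact lift_ι_apply f x

theorem liftOfCentral_algebraMap (φ : R →+* A) (hφ : ∀ r a, φ r * a = a * φ r) (f : X → A)
    (r : R) : liftOfCentral φ hφ f (algebraMap R _ r) = φ r := by
  let := φ.toAlgebra' hφ
  exact (lift R f).commutes r

theorem ringHom_ext {f g : FreeAlgebra R X →+* A}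
    (halg : ∀ r, f (algebraMap R _ r) = g (algebraMap R _ r)) (hι : ∀ x, f (ι R x) = g (ι R x)) :
    f = g := by
  ext a
  induction a using FreeAlgebra.induction with
  | grade0 r => exact halg r
  | grade1 x => exact hι x
  | mul a b ha hb => rw [map_mul, map_mul, ha, hb]
  | add a b ha hb => rw [map_add, map_add, ha, hb]

end FreeAlgebra

section QuadraticRelation
variable {K A : Type*} [CommRing K] [Ring A] [Algebra K A] {e g : A} {c c' : K}

theorem mul_add_smul_eq_one (he : IsIdempotentElem e) (heg : Commute e g)
    (hq : g * g = 1 + c • (e * (1 + g))) (hc : (1 + c) * (1 + c') = 1) :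
    g * (g + c' • (e * (1 + g))) = 1 := by
  have hge : ∀ x : A, g * (e * x) = e * (g * x) := fun x => heg.symm.left_comm x
  have hee : ∀ x : A, e * (e * x) = e * x := fun x => by rw [← mul_assoc, he.eq]
  simp only [mul_add, mul_one, smul_add, mul_smul_comm, smul_smul, hge, hee, he.eq, ← heg.eq,
    hq]
  rw [add_assoc, add_eq_left]
  match_scalars <;> linear_combination hc

theorem add_smul_mul_eq_one (he : IsIdempotentElem e) (heg : Commute e g)
    (hq : g * g = 1 + c • (e * (1 + g))) (hc : (1 + c) * (1 + c') = 1) :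
    (g + c' • (e * (1 + g))) * g = 1 := by
  have hcomm : Commute g (g + c' • (e * (1 + g))) :=
    (Commute.refl g).add_right
      ((heg.symm.mul_right ((Commute.one_right g).add_right (Commute.refl g))).smul_right c')
  rw [← hcomm.eq, mul_add_smul_eq_one he heg hq hc]

theorem add_smul_mul_self (he : IsIdempotentElem e) (heg : Commute e g)
    (hq : g * g = 1 + c • (e * (1 + g))) (hc : (1 + c) * (1 + c') = 1) :
    (g + c' • (e * (1 + g))) * (g + c' • (e * (1 + g))) =
      1 + c' • (e * (1 + (g + c' • (e * (1 + g))))) := by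
  have hge : ∀ x : A, g * (e * x) = e * (g * x) := fun x => heg.symm.left_comm x
  have hee : ∀ x : A, e * (e * x) = e * x := fun x => by rw [← mul_assoc, he.eq]
  simp only [mul_add, add_mul, mul_one, smul_add, mul_smul_comm, smul_mul_assoc, smul_smul,
    mul_assoc, hge, hee, he.eq, ← heg.eq, hq]
  match_scalars
  · rfl
  all_goals linear_combination (1 + c') * hc

theorem mul_add_smul_mul_eq_mul_mul_add_smul {a b : A} (ha : IsIdempotentElem a)
    (hb : IsIdempotentElem b) (hab : Commute a b) (r : a * b * g = a * g * a) :
    a * (g + c • (b * (1 + g))) * a = a * b * (g + c • (b * (1 + g))) := by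
  have haba : a * b * a = a * b := by rw [mul_assoc, ← hab.eq, ← mul_assoc, ha.eq]
  have habb : a * b * b = a * b := by rw [mul_assoc, hb.eq]
  have habga : a * b * g * a = a * b * g := by rw [r, mul_assoc, ha.eq]
  simp only [mul_add, add_mul, mul_one, mul_smul_comm, smul_mul_assoc, ← mul_assoc, haba, habb,
    habga, ← r]

end QuadraticRelation

theorem invXEquiv_vv : RatFunc.invXEquiv vv = vv⁻¹ := RatFunc.invXEquiv_X

theorem one_add_vv_sq_sub_one_mul : (1 + (vv ^ 2 - 1)) * (1 + (vv⁻¹ ^ 2 - 1)) = 1 := by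
  have hv : vv ≠ 0 := RatFunc.X_ne_zero
  field_simp
  ring

namespace BT
variable {n : ℕ} {i j : Fin n}

theorem commute_bg_of_two_le_dist (h : 2 ≤ Nat.dist i j) : Commute (bg n i) (bg n j) := by
  simpa [bg, commute_iff_eq] using RingQuot.mkAlgHom_rel Kv (BTRel.gg_comm i j h)

theorem commute_be_bg_of_two_le_dist (h : 2 ≤ Nat.dist i j) : Commute (be n i) (bg n j) := by
  simpa [bg, be, commute_iff_eq] using RingQuot.mkAlgHom_rel Kv (BTRel.eg_comm i j h)

theorem bg_braid (h : Nat.dist i j = 1) :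
    bg n i * bg n j * bg n i = bg n j * bg n i * bg n j := by
  simpa [bg] using RingQuot.mkAlgHom_rel Kv (BTRel.braid i j h)

theorem be_mul_bg_mul_bg (h : Nat.dist i j = 1) :
    be n i * bg n j * bg n i = bg n j * bg n i * be n j := by
  simpa [bg, be] using RingQuot.mkAlgHom_rel Kv (BTRel.egg i j h)

theorem commute_be_be (i j : Fin n) : Commute (be n i) (be n j) := by
  simpa [be, commute_iff_eq] using RingQuot.mkAlgHom_rel Kv (BTRel.ee_comm i j)

theorem isIdempotentElem_be (i : Fin n) : IsIdempotentElem (be n i) := by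
  simpa [be, isIdempotentElem_iff] using RingQuot.mkAlgHom_rel Kv (BTRel.e_idem i)

theorem commute_be_bg (i : Fin n) : Commute (be n i) (bg n i) := by
  simpa [bg, be, commute_iff_eq] using RingQuot.mkAlgHom_rel Kv (BTRel.eg_same i)

theorem be_mul_be_mul_bg (h : Nat.dist i j = 1) :
    be n i * be n j * bg n j = be n i * bg n j * be n i := by
  simpa [bg, be] using RingQuot.mkAlgHom_rel Kv (BTRel.eeg₁ i j h)

theorem be_mul_bg_mul_be (h : Nat.dist i j = 1) :
    be n i * bg n j * be n i = bg n j * be n i * be n j := by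
  simpa [bg, be] using RingQuot.mkAlgHom_rel Kv (BTRel.eeg₂ i j h)

theorem bg_mul_bg (i : Fin n) :
    bg n i * bg n i = 1 + (vv ^ 2 - 1) • (be n i * (1 + bg n i)) := by
  simpa [bg, be] using RingQuot.mkAlgHom_rel Kv (BTRel.quad i)

def bgUnit (n : ℕ) (i : Fin n) : (BT n)ˣ where
  val := bg n i
  inv := bg n i + (vv⁻¹ ^ 2 - 1) • (be n i * (1 + bg n i))
  val_inv := mul_add_smul_eq_one (isIdempotentElem_be i) (commute_be_bg i) (bg_mul_bg i)
    one_add_vv_sq_sub_one_mul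
  inv_val := add_smul_mul_eq_one (isIdempotentElem_be i) (commute_be_bg i) (bg_mul_bg i)
    one_add_vv_sq_sub_one_mul

theorem bg_mul_bgUnit_inv (i : Fin n) : bg n i * ↑(bgUnit n i)⁻¹ = 1 := (bgUnit n i).mul_inv

theorem bgUnit_inv_mul_bg (i : Fin n) : ↑(bgUnit n i)⁻¹ * bg n i = 1 := (bgUnit n i).inv_mul

theorem bgUnit_inv_mul_self (i : Fin n) :
    ↑(bgUnit n i)⁻¹ * ↑(bgUnit n i)⁻¹ =
      1 + (vv⁻¹ ^ 2 - 1) • (be n i * (1 + ↑(bgUnit n i)⁻¹)) :=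
  add_smul_mul_self (isIdempotentElem_be i) (commute_be_bg i) (bg_mul_bg i)
    one_add_vv_sq_sub_one_mul

theorem be_mul_bgUnit_inv_mul_be (h : Nat.dist i j = 1) :
    be n i * ↑(bgUnit n j)⁻¹ * be n i = be n i * be n j * ↑(bgUnit n j)⁻¹ :=
  mul_add_smul_mul_eq_mul_mul_add_smul (isIdempotentElem_be i) (isIdempotentElem_be j)
    (commute_be_be i j) (be_mul_be_mul_bg h)

theorem commute_be_mul_be_bgUnit_inv (h : Nat.dist i j = 1) :
    Commute (be n i * be n j) ↑(bgUnit n j)⁻¹ := by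
  refine Commute.units_inv_right ?_
  change be n i * be n j * bg n j = bg n j * (be n i * be n j)
  rw [be_mul_be_mul_bg h, be_mul_bg_mul_be h, mul_assoc]

def barFree (n : ℕ) : FreeAlgebra Kv (Fin n ⊕ Fin n) →+* BT n :=
  FreeAlgebra.liftOfCentral ((algebraMap Kv (BT n)).comp RatFunc.invXEquiv.toRingHom)
    (fun p _ => Algebra.commutes (RatFunc.invXEquiv p) _)
    (Sum.elim (fun i => ↑(bgUnit n i)⁻¹) (be n))

theorem barFree_bgF (i : Fin n) : barFree n (bgF n i) = ↑(bgUnit n i)⁻¹ :=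
  FreeAlgebra.liftOfCentral_ι _ _ _ (Sum.inl i)

theorem barFree_beF (i : Fin n) : barFree n (beF n i) = be n i :=
  FreeAlgebra.liftOfCentral_ι _ _ _ (Sum.inr i)

theorem barFree_algebraMap (p : Kv) :
    barFree n (algebraMap Kv _ p) = algebraMap Kv (BT n) (RatFunc.invXEquiv p) :=
  FreeAlgebra.liftOfCentral_algebraMap _ _ _ _

theorem barFree_smul (p : Kv) (x : FreeAlgebra Kv (Fin n ⊕ Fin n)) :
    barFree n (p • x) = RatFunc.invXEquiv p • barFree n x := by
  rw [Algebra.smul_def, map_mul, barFree_algebraMap, ← Algebra.smul_def]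

theorem barFree_rel ⦃x y : FreeAlgebra Kv (Fin n ⊕ Fin n)⦄ (h : BTRel n x y) :
    barFree n x = barFree n y := by
  induction h with
  | gg_comm i j h =>
    simp only [map_mul, barFree_bgF]
    exact (Commute.units_val_iff.mp (commute_bg_of_two_le_dist h)).inv_inv.units_val.eq
  | eg_comm i j h =>
    simp only [map_mul, barFree_bgF, barFree_beF]
    exact (commute_be_bg_of_two_le_dist h).units_inv_right.eq
  | braid i j h =>
    simp only [map_mul, barFree_bgF]
    have hu : bgUnit n i * bgUnit n j * bgUnit n i = bgUnit n j * bgUnit n i * bgUnit n j :=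
      Units.ext (bg_braid h)
    simpa [mul_inv_rev, mul_assoc] using congrArg (fun u : (BT n)ˣ => (↑u⁻¹ : BT n)) hu
  | egg i j h =>
    simp only [map_mul, barFree_bgF, barFree_beF]
    have hx : SemiconjBy ↑(bgUnit n i * bgUnit n j) (be n i) (be n j) := by
      change bg n i * bg n j * be n i = be n j * (bg n i * bg n j)
      rw [← mul_assoc, be_mul_bg_mul_bg (Nat.dist_comm i j ▸ h)]
    simpa [mul_inv_rev, SemiconjBy, mul_assoc] using hx.units_inv_symm_left.symm
  | ee_comm i j => simpa only [map_mul, barFree_beF] using (commute_be_be i j).eq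
  | e_idem i => simpa only [map_mul, barFree_beF] using (isIdempotentElem_be i).eq
  | eg_same i =>
    simp only [map_mul, barFree_bgF, barFree_beF]
    exact (commute_be_bg i).units_inv_right.eq
  | eeg₁ i j h =>
    simp only [map_mul, barFree_bgF, barFree_beF]
    exact (be_mul_bgUnit_inv_mul_be h).symm
  | eeg₂ i j h =>
    simp only [map_mul, barFree_bgF, barFree_beF]
    rw [be_mul_bgUnit_inv_mul_be h, (commute_be_mul_be_bgUnit_inv h).eq, mul_assoc]
  | quad i =>
    simp only [map_mul, map_add, map_one, barFree_smul, barFree_bgF, barFree_beF, map_sub,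
      map_pow, invXEquiv_vv]
    exact bgUnit_inv_mul_self i

def bar (n : ℕ) : BT n →+* BT n :=
  RingQuot.lift ⟨barFree n, barFree_rel⟩

theorem bar_mk (x : FreeAlgebra Kv (Fin n ⊕ Fin n)) :
    bar n (RingQuot.mkAlgHom Kv (BTRel n) x) = barFree n x :=
  (congrArg (bar n) (RingHom.congr_fun (RingQuot.mkAlgHom_coe Kv (BTRel n)) x)).trans
    (RingQuot.lift_mkRingHom_apply (barFree n) barFree_rel x)

theorem bar_bg (i : Fin n) : bar n (bg n i) = ↑(bgUnit n i)⁻¹ :=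
  (bar_mk (bgF n i)).trans (barFree_bgF i)

theorem bar_be (i : Fin n) : bar n (be n i) = be n i :=
  (bar_mk (beF n i)).trans (barFree_beF i)

theorem bar_algebraMap (p : Kv) :
    bar n (algebraMap Kv (BT n) p) = algebraMap Kv (BT n) (RatFunc.invXEquiv p) := by
  rw [← (RingQuot.mkAlgHom Kv (BTRel n)).commutes, bar_mk, barFree_algebraMap]

theorem bar_smul (p : Kv) (x : BT n) : bar n (p • x) = RatFunc.invXEquiv p • bar n x := by
  rw [Algebra.smul_def, map_mul, bar_algebraMap, ← Algebra.smul_def]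

theorem bar_bgUnit_inv (i : Fin n) : bar n ↑(bgUnit n i)⁻¹ = bg n i := by
  have h : bar n (bg n i) * bar n ↑(bgUnit n i)⁻¹ = 1 := by
    rw [← map_mul, bg_mul_bgUnit_inv, map_one]
  rw [bar_bg] at h
  exact (Units.inv_mul_eq_one.mp h).symm

theorem bar_comp_bar : (bar n).comp (bar n) = RingHom.id (BT n) := by
  refine RingQuot.ringQuot_ext _ _ (FreeAlgebra.ringHom_ext (fun p => ?_) fun s => ?_)
  · simp only [RingHom.comp_apply, ← RingQuot.mkAlgHom_coe Kv, RingHom.coe_coe, AlgHom.commutes,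
      bar_algebraMap, RatFunc.invXEquiv_invXEquiv, RingHom.id_apply]
  · rcases s with i | i
    · simp only [RingHom.comp_apply, ← RingQuot.mkAlgHom_coe Kv, RingHom.coe_coe]
      exact (congrArg (bar n) (bar_bg i)).trans (bar_bgUnit_inv i)
    · simp only [RingHom.comp_apply, ← RingQuot.mkAlgHom_coe Kv, RingHom.coe_coe]
      exact (congrArg (bar n) (bar_be i)).trans (bar_be i)

def barEquiv (n : ℕ) : BT n ≃+* BT n :=
  .ofRingHom (bar n) (bar n) bar_comp_bar bar_comp_bar

end BT

theorem bar_involution_exists_general (n : ℕ) :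
    ∃ τ : Kv ≃ₐ[ℂ] Kv, τ vv = vv⁻¹ ∧
      ∃ σ : BT n ≃+* BT n,
        (∀ i, σ (be n i) = be n i) ∧
        (∀ i, σ (bg n i) * bg n i = 1 ∧ bg n i * σ (bg n i) = 1) ∧
        (∀ (p : Kv) (x : BT n), σ (p • x) = τ p • σ x) := by
  refine ⟨RatFunc.invXEquiv, invXEquiv_vv, BT.barEquiv n, BT.bar_be, fun i => ?_, BT.bar_smul⟩
  change BT.bar n (bg n i) * bg n i = 1 ∧ bg n i * BT.bar n (bg n i) = 1
  rw [BT.bar_bg]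
  exact ⟨BT.bgUnit_inv_mul_bg i, BT.bg_mul_bgUnit_inv i⟩

/-- There is a ring automorphism `σ` of `ℰ_n(v)` with `σ(e_i) = e_i`,
`σ(g_i) = g_i^{-1}` (two-sided inverse), which is semilinear over the `ℂ`-algebra
automorphism `τ` of `ℂ(v)` sending `v` to `v⁻¹`. -/
theorem bar_involution_exists (n : ℕ) (hn : 1 ≤ n) :
    ∃ τ : Kv ≃ₐ[ℂ] Kv, τ vv = vv⁻¹ ∧
      ∃ σ : BT n ≃+* BT n,
        (∀ i, σ (be n i) = be n i) ∧
        (∀ i, σ (bg n i) * bg n i = 1 ∧ bg n i * σ (bg n i) = 1) ∧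
        (∀ (p : Kv) (x : BT n), σ (p • x) = τ p • σ x) :=
  bar_involution_exists_general n
end
end

section
/- In the Yokonuma–Hecke algebra Y, Juyumaya's generators satisfy the braid relations: L_i L_j L_i = L_j L_i L_j whenever |i−j| = 1, and L_i L_j = L_j L_i whenever |i−j| ≥ 2. -/
noncomputable section

/-- The product-of-coordinates homomorphism `(Fin m → Fˣ) →* Fˣ`. -/
def prodHom (m : ℕ) (F : Type*) [Field F] : (Fin m → Fˣ) →* Fˣ :=
  MonoidHom.mk' (fun f => ∏ i, f i) (by
    intro a b
    simp [Finset.prod_mul_distrib])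

/-- The diagonal torus `T` of `SL_{n+1}(F)`: tuples in `Fˣ` with product `1`,
as a subgroup of `Fin (n+1) → Fˣ`. -/
def TGrp (n : ℕ) (F : Type*) [Field F] : Subgroup (Fin (n + 1) → Fˣ) :=
  (prodHom (n + 1) F).ker

/-- The action of the adjacent transposition `s_i` on the diagonal torus, exchanging
the `i`-th and `(i+1)`-st diagonal entries. -/
def sAct {n : ℕ} {F : Type*} [Field F] (i : Fin n) (t : TGrp n F) : TGrp n F :=
  ⟨fun j => t.1 (Equiv.swap i.castSucc i.succ j), by
    have h : ∏ j, t.1 j = 1 := t.2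
    have := Equiv.prod_comp (Equiv.swap i.castSucc i.succ) t.1
    simp only [TGrp, MonoidHom.mem_ker, prodHom, MonoidHom.mk'_apply]
    rw [this, h]⟩

/-- `h_i(r)`: the diagonal matrix with `r` in position `i`, `r⁻¹` in position `i+1`,
and `1` elsewhere. -/
def hElem {n : ℕ} {F : Type*} [Field F] [DecidableEq F] (i : Fin n) (r : Fˣ) :
    TGrp n F :=
  ⟨Pi.mulSingle i.castSucc r * Pi.mulSingle i.succ r⁻¹, by
    simp only [TGrp, MonoidHom.mem_ker, prodHom, MonoidHom.mk'_apply, Pi.mul_apply,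
      Finset.prod_mul_distrib]
    rw [Finset.prod_pi_mulSingle', Finset.prod_pi_mulSingle']
    simp⟩

/-- The generator `R_i` in the free algebra, for `i` a simple reflection. -/
def yR (n : ℕ) (F : Type*) [Field F] (i : Fin n) :
    FreeAlgebra ℂ (Fin n ⊕ ↥(TGrp n F)) :=
  FreeAlgebra.ι ℂ (Sum.inl i)

/-- The generator `R_t` in the free algebra, for `t` in the diagonal torus. -/
def yT (n : ℕ) (F : Type*) [Field F] (t : TGrp n F) :
    FreeAlgebra ℂ (Fin n ⊕ ↥(TGrp n F)) :=
  FreeAlgebra.ι ℂ (Sum.inr t)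

/-- Defining relations of the Yokonuma–Hecke algebra, with `Q = |F|`,
`H_i(r) = R_{h_i(r)}` and `E_i = Σ_{r ∈ F^×} H_i(r)`. -/
inductive YRel (n : ℕ) (F : Type*) [Field F] [Fintype F] [DecidableEq F] :
    FreeAlgebra ℂ (Fin n ⊕ ↥(TGrp n F)) → FreeAlgebra ℂ (Fin n ⊕ ↥(TGrp n F)) → Prop
  | comm (i j : Fin n) (h : 2 ≤ Nat.dist i j) :
      YRel n F (yR n F i * yR n F j) (yR n F j * yR n F i)
  | braid (i j : Fin n) (h : Nat.dist i j = 1) :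
      YRel n F (yR n F i * yR n F j * yR n F i) (yR n F j * yR n F i * yR n F j)
  | t_comm (t : TGrp n F) (i : Fin n) :
      YRel n F (yT n F t * yR n F i) (yR n F i * yT n F (sAct i t))
  | t_mul (t t' : TGrp n F) :
      YRel n F (yT n F t * yT n F t') (yT n F (t * t'))
  | t_one : YRel n F (yT n F 1) 1
  | quad (i : Fin n) :
      YRel n F (yR n F i * yR n F i)
        ((Fintype.card F : ℂ) • yT n F (hElem i (-1)) +
          yR n F i * ∑ r : Fˣ, yT n F (hElem i r))

/-- The Yokonuma–Hecke algebra `Y`. -/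
abbrev Yok (n : ℕ) (F : Type*) [Field F] [Fintype F] [DecidableEq F] :=
  RingQuot (YRel n F)

/-- The standard generator `R_i` of `Y`. -/
noncomputable def yokR (n : ℕ) (F : Type*) [Field F] [Fintype F] [DecidableEq F]
    (i : Fin n) : Yok n F :=
  RingQuot.mkAlgHom ℂ (YRel n F) (yR n F i)

/-- The standard generator `R_t` of `Y`. -/
noncomputable def yokT (n : ℕ) (F : Type*) [Field F] [Fintype F] [DecidableEq F]
    (t : TGrp n F) : Yok n F :=
  RingQuot.mkAlgHom ℂ (YRel n F) (yT n F t)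

/-- `E_i = Σ_{r ∈ F^×} H_i(r) ∈ Y`, where `H_i(r) = R_{h_i(r)}`. -/
noncomputable def yokE (n : ℕ) (F : Type*) [Field F] [Fintype F] [DecidableEq F]
    (i : Fin n) : Yok n F :=
  ∑ r : Fˣ, yokT n F (hElem i r)

/-- Juyumaya's generator `L_i = Q⁻¹(E_i + R_i Ψ_i)`, where
`Ψ_i = Σ_{r ∈ F^×} ψ(r) H_i(r)`. -/
noncomputable def yokL (n : ℕ) (F : Type*) [Field F] [Fintype F] [DecidableEq F]
    (ψ : F → ℂ) (i : Fin n) : Yok n F :=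
  (Fintype.card F : ℂ)⁻¹ •
    (yokE n F i + yokR n F i * ∑ r : Fˣ, ψ (r : F) • yokT n F (hElem i r))

/-!
For adjacent `i` and `j = i + 1` the torus elements `h_i(a) h_j(b)` form the image of the group
algebra `ℂ[F^× × F^×]`, and `R_i`, `R_j` normalise this image, acting through the automorphisms of
`F^× × F^×` induced by `s_i` and `s_j`. Writing `L_i = Q⁻¹ (E_i + R_i Ψ_i)` and
`L_j = Q⁻¹ (E_j + R_j Ψ_j)` with `E`, `Ψ` in that image, both `L_i L_j L_i` and `L_j L_i L_j`
expand, after one use of the quadratic relation, into combinations of the words `1`, `R_i`, `R_j`,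
`R_i R_j`, `R_j R_i` and `R_i R_j R_i = R_j R_i R_j` with coefficients in the commutative group
algebra. The coefficients agree by short computations there: sums over a subgroup absorb the
elements of that subgroup, and two of the coefficients also need `∑_{r ∈ F^×} ψ(r) = -1`.
For `|i - j| ≥ 2` every generator occurring in `L_i` commutes with every one occurring in `L_j`.
-/

section Torus
variable {n : ℕ} {F : Type*} [Field F]

theorem sAct_apply (i : Fin n) (t : TGrp n F) (k : Fin (n + 1)) :
    (sAct i t : Fin (n + 1) → Fˣ) k = (t : Fin (n + 1) → Fˣ) (Equiv.swap i.castSucc i.succ k) :=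
  rfl

theorem sAct_mul (i : Fin n) (t t' : TGrp n F) : sAct i (t * t') = sAct i t * sAct i t' := rfl

variable [DecidableEq F]

theorem hElem_apply (i : Fin n) (r : Fˣ) (k : Fin (n + 1)) :
    (hElem i r : Fin (n + 1) → Fˣ) k =
      if k = i.castSucc then r else if k = i.succ then r⁻¹ else 1 := by
  have : i.castSucc ≠ i.succ := Fin.castSucc_lt_succ.ne
  simp only [hElem, Pi.mul_apply, Pi.mulSingle_apply]
  split_ifs <;> simp_all

theorem hElem_mul (i : Fin n) (a b : Fˣ) :
    (hElem i (a * b) : TGrp n F) = hElem i a * hElem i b := by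
  ext k : 2
  simp only [Subgroup.coe_mul, Pi.mul_apply, hElem_apply]
  split_ifs <;> simp [mul_comm]

theorem hElem_one (i : Fin n) : (hElem i 1 : TGrp n F) = 1 := by
  ext k : 2
  simp [hElem_apply]

def hElemHom (i : Fin n) : Fˣ →* TGrp n F where
  toFun := hElem i
  map_one' := hElem_one i
  map_mul' := hElem_mul i

theorem sAct_hElem_self (i : Fin n) (r : Fˣ) : sAct i (hElem i r : TGrp n F) = hElem i r⁻¹ := by
  ext k : 2
  simp only [sAct_apply, hElem_apply, Equiv.swap_apply_def]
  split_ifs <;> simp only [Fin.ext_iff, Fin.val_succ, Fin.val_castSucc] at * <;>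
    first | omega | simp_all

theorem sAct_hElem_succ {i j : Fin n} (hij : (j : ℕ) = i + 1) (r : Fˣ) :
    sAct i (hElem j r : TGrp n F) = hElem i r * hElem j r := by
  ext k : 2
  simp only [Subgroup.coe_mul, Pi.mul_apply, sAct_apply, hElem_apply, Equiv.swap_apply_def]
  split_ifs <;> simp only [Fin.ext_iff, Fin.val_succ, Fin.val_castSucc] at * <;>
    first | omega | simp_all

theorem sAct_succ_hElem {i j : Fin n} (hij : (j : ℕ) = i + 1) (r : Fˣ) :
    sAct j (hElem i r : TGrp n F) = hElem i r * hElem j r := by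
  ext k : 2
  simp only [Subgroup.coe_mul, Pi.mul_apply, sAct_apply, hElem_apply, Equiv.swap_apply_def]
  split_ifs <;> simp only [Fin.ext_iff, Fin.val_succ, Fin.val_castSucc] at * <;>
    first | omega | simp_all

theorem sAct_hElem_of_two_le_dist {i j : Fin n} (h : 2 ≤ Nat.dist i j) (r : Fˣ) :
    sAct i (hElem j r : TGrp n F) = hElem j r := by
  have : (i : ℕ) + 2 ≤ j ∨ (j : ℕ) + 2 ≤ i := by unfold Nat.dist at h; omega
  ext k : 2
  simp only [sAct_apply, hElem_apply, Equiv.swap_apply_def]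
  split_ifs <;> simp only [Fin.ext_iff, Fin.val_succ, Fin.val_castSucc] at * <;> omega

end Torus

section Relations
variable {n : ℕ} {F : Type*} [Field F] [Fintype F] [DecidableEq F]

theorem yokT_mul (t t' : TGrp n F) : yokT n F t * yokT n F t' = yokT n F (t * t') := by
  simp only [yokT, ← map_mul]
  exact RingQuot.mkAlgHom_rel ℂ (YRel.t_mul t t')

theorem yokT_one : yokT n F 1 = 1 := by
  rw [yokT, ← map_one (RingQuot.mkAlgHom ℂ (YRel n F))]
  exact RingQuot.mkAlgHom_rel ℂ YRel.t_one

theorem yokT_mul_yokR (t : TGrp n F) (i : Fin n) :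
    yokT n F t * yokR n F i = yokR n F i * yokT n F (sAct i t) := by
  simp only [yokT, yokR, ← map_mul]
  exact RingQuot.mkAlgHom_rel ℂ (YRel.t_comm t i)

theorem yokR_comm {i j : Fin n} (h : 2 ≤ Nat.dist i j) :
    yokR n F i * yokR n F j = yokR n F j * yokR n F i := by
  simp only [yokR, ← map_mul]
  exact RingQuot.mkAlgHom_rel ℂ (YRel.comm i j h)

theorem yokR_braid {i j : Fin n} (h : Nat.dist i j = 1) :
    yokR n F i * yokR n F j * yokR n F i = yokR n F j * yokR n F i * yokR n F j := by
  simp only [yokR, ← map_mul]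
  exact RingQuot.mkAlgHom_rel ℂ (YRel.braid i j h)

theorem yokR_mul_self (i : Fin n) :
    yokR n F i * yokR n F i =
      (Fintype.card F : ℂ) • yokT n F (hElem i (-1)) + yokR n F i * yokE n F i := by
  have h := RingQuot.mkAlgHom_rel ℂ (YRel.quad (n := n) (F := F) i)
  rwa [map_mul, map_add, map_smul, map_mul, map_sum] at h

def yokTHom : TGrp n F →* Yok n F where
  toFun := yokT n F
  map_one' := yokT_one
  map_mul' t t' := (yokT_mul t t').symm

end Relations

open MonoidAlgebra

section RangeSum
variable {k G K L : Type*} [CommSemiring k] [CommGroup G] [Group K] [Fintype K] [Group L]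
  [Fintype L]

def rangeSum (c : K → k) (φ : K →* G) : MonoidAlgebra k G := ∑ a, single (φ a) (c a)

theorem mapDomainRingHom_rangeSum {H : Type*} [CommGroup H] (τ : G →* H) (c : K → k)
    (φ : K →* G) : mapDomainRingHom k τ (rangeSum c φ) = rangeSum c (τ.comp φ) := by
  simp [rangeSum, mapDomain_single]

theorem rangeSum_comp_of_bijective (c : K → k) (φ : K →* G) {χ : L →* K}
    (hχ : Function.Bijective χ) : rangeSum (c ∘ χ) (φ.comp χ) = rangeSum c φ :=
  Fintype.sum_bijective χ hχ _ _ fun _ => rfl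

theorem rangeSum_one_comp_invMonoidHom {H : Type*} [CommGroup H] [Fintype H] (φ : H →* G) :
    rangeSum (1 : H → k) (φ.comp invMonoidHom) = rangeSum 1 φ :=
  rangeSum_comp_of_bijective 1 φ inv_involutive.bijective

theorem rangeSum_one_of_bijective [Fintype G] {θ : K →* G} (hθ : Function.Bijective θ) :
    rangeSum (1 : K → k) θ = rangeSum 1 (MonoidHom.id G) :=
  rangeSum_comp_of_bijective 1 (MonoidHom.id G) hθ

theorem rangeSum_mul_rangeSum (c : K → k) (d : L → k) (φ : K →* G) (χ : L →* G) :
    rangeSum c φ * rangeSum d χ = rangeSum (fun x => c x.1 * d x.2) (φ.coprod χ) := by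
  simp only [rangeSum, Finset.sum_mul_sum, single_mul_single, Fintype.sum_prod_type,
    MonoidHom.coprod_apply]

theorem rangeSum_one_mul_rangeSum_one (φ : K →* G) (χ : L →* G) :
    rangeSum (1 : K → k) φ * rangeSum 1 χ = rangeSum 1 (φ.coprod χ) := by
  rw [rangeSum_mul_rangeSum]
  simp only [Pi.one_apply, mul_one]
  rfl

theorem rangeSum_one_mul_single (φ : K →* G) (a : K) (r : k) :
    rangeSum 1 φ * single (φ a) r = r • rangeSum (1 : K → k) φ := by
  simp only [rangeSum, Finset.sum_mul, single_mul_single, Pi.one_apply, one_mul,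
    Finset.smul_sum, smul_single, smul_eq_mul, mul_one, ← map_mul]
  exact Fintype.sum_equiv (Equiv.mulRight a) _ (fun b => single (φ b) r) fun _ => rfl

theorem rangeSum_one_mul_rangeSum_comp (φ : K →* G) (c : L → k) (χ : L →* K) :
    rangeSum 1 φ * rangeSum c (φ.comp χ) = (∑ a, c a) • rangeSum (1 : K → k) φ := by
  simp only [rangeSum, Finset.mul_sum, Finset.sum_smul]
  exact Finset.sum_congr rfl fun a _ => rangeSum_one_mul_single φ (χ a) (c a)

theorem rangeSum_one_id_mul [Fintype G] (c : K → k) (φ : K →* G) :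
    rangeSum (1 : G → k) (MonoidHom.id G) * rangeSum c φ =
      (∑ a, c a) • rangeSum 1 (MonoidHom.id G) :=
  rangeSum_one_mul_rangeSum_comp _ c φ

theorem single_mul_rangeSum_one (φ : K →* G) (g : G) (r : k) (a : K) :
    single g r * rangeSum 1 φ = single (g * φ a) r * rangeSum 1 φ := by
  rw [← mul_one r, ← single_mul_single, mul_one, mul_assoc, mul_comm (single (φ a) 1),
    rangeSum_one_mul_single, one_smul]

end RangeSum

theorem expand_braid_word {A B Φ : Type*} [CommRing A] [Ring B] [FunLike Φ A B]
    [RingHomClass Φ A B] (φ : Φ) {r s : B} {σ ρ : A →+* A} {q e : A}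
    (hr : ∀ x, φ x * r = r * φ (σ x)) (hs : ∀ x, φ x * s = s * φ (ρ x))
    (hrr : r * r = φ q + r * φ e) (a b c d : A) :
    (φ a + r * φ b) * (φ c + s * φ d) * (φ a + r * φ b) =
      φ (a * c * a + q * σ (b * c) * b) +
        r * φ (σ (a * c) * b + b * c * a + e * σ (b * c) * b) +
        s * φ (ρ a * d * a) + r * s * φ (ρ b * d * a) + s * r * φ (σ (ρ a * d) * b) +
        r * s * r * φ (σ (ρ b * d) * b) := by
  have hr' : ∀ x z, φ x * (r * z) = r * (φ (σ x) * z) := fun x z => by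
    rw [← mul_assoc, hr, mul_assoc]
  have hs' : ∀ x z, φ x * (s * z) = s * (φ (ρ x) * z) := fun x z => by
    rw [← mul_assoc, hs, mul_assoc]
  have hrr' : ∀ z, r * (r * z) = φ q * z + r * (φ e * z) := fun z => by
    rw [← mul_assoc, hrr, add_mul, mul_assoc]
  simp only [map_add, map_mul, add_mul, mul_add, mul_assoc, hr', hs', hrr']
  abel

section Reflections
variable {G : Type*} [CommGroup G]

open MonoidHom

/- In the coordinates `(a, b) ↦ h_i(a) h_{i+1}(b) = diag(a, a⁻¹ b, b⁻¹)` of the torus,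
`s_i` acts as `reflFst` and `s_{i+1}` as `reflSnd`. -/
def reflFst : G × G →* G × G := ((fst G G)⁻¹ * snd G G).prod (snd G G)

def reflSnd : G × G →* G × G := (fst G G).prod (fst G G * (snd G G)⁻¹)

def diagHom : G →* G × G := (MonoidHom.id G).prod (MonoidHom.id G)

@[simp]
theorem reflFst_apply (g : G × G) : reflFst g = (g.1⁻¹ * g.2, g.2) := rfl

@[simp]
theorem reflSnd_apply (g : G × G) : reflSnd g = (g.1, g.1 * g.2⁻¹) := rfl

theorem reflFst_comp_inl : reflFst.comp (inl G G) = (inl G G).comp invMonoidHom := by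
  ext <;> simp

theorem reflFst_comp_inr : reflFst.comp (inr G G) = diagHom := by
  ext <;> simp [diagHom]

theorem reflFst_comp_diagHom : reflFst.comp diagHom = inr G G := by
  ext <;> simp [diagHom]

theorem reflSnd_comp_inl : reflSnd.comp (inl G G) = diagHom := by
  ext <;> simp [diagHom]

theorem reflSnd_comp_inr : reflSnd.comp (inr G G) = (inr G G).comp invMonoidHom := by
  ext <;> simp

theorem reflSnd_comp_diagHom : reflSnd.comp diagHom = inl G G := by
  ext <;> simp [diagHom]

variable [Finite G]

theorem bijective_inl_coprod_diagHom : Function.Bijective ((inl G G).coprod diagHom) := by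
  refine Finite.injective_iff_bijective.mp <| (injective_iff_map_eq_one _).mpr fun g hg => ?_
  obtain ⟨h1, h2⟩ : g.1 * g.2 = 1 ∧ g.2 = 1 := by simpa [Prod.ext_iff, diagHom] using hg
  simpa [Prod.ext_iff, h2] using h1

theorem bijective_inr_coprod_diagHom : Function.Bijective ((inr G G).coprod diagHom) := by
  refine Finite.injective_iff_bijective.mp <| (injective_iff_map_eq_one _).mpr fun g hg => ?_
  obtain ⟨h1, h2⟩ : g.2 = 1 ∧ g.1 * g.2 = 1 := by simpa [Prod.ext_iff, diagHom] using hg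
  simpa [Prod.ext_iff, h1] using h2

end Reflections

section BraidCoefficients
variable {k G : Type*} [CommRing k] [CommGroup G] [Fintype G] (c : G → k)

open MonoidHom

/- With `c = ψ`, `torusAlgHom i (i + 1)` maps `𝐮, 𝐯, 𝐩, 𝐰` to `E_i, E_{i+1}, Ψ_i, Ψ_{i+1}`. The
`braidCoeff` identities say that the two expansions of `expand_braid_word` have the same
coefficient at each of the words `1, R_i, R_{i+1}, R_i R_{i+1}, R_{i+1} R_i, R_i R_{i+1} R_i`. -/
local notation "σ" => mapDomainRingHom k (reflFst (G := G))
local notation "ρ" => mapDomainRingHom k (reflSnd (G := G))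
local notation "𝐮" => rangeSum (1 : G → k) (inl G G)
local notation "𝐯" => rangeSum (1 : G → k) (inr G G)
local notation "𝐝" => rangeSum (1 : G → k) (diagHom (G := G))
local notation "𝐬" => rangeSum (1 : G × G → k) (MonoidHom.id (G × G))
local notation "𝐩" => rangeSum c (inl G G)
local notation "𝐰" => rangeSum c (inr G G)

theorem rangeSum_one_inl_mul_inr : 𝐮 * 𝐯 = 𝐬 := by
  rw [rangeSum_one_mul_rangeSum_one, coprod_inl_inr]

theorem rangeSum_one_inl_mul_diagHom : 𝐮 * 𝐝 = 𝐬 := by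
  rw [rangeSum_one_mul_rangeSum_one, rangeSum_one_of_bijective bijective_inl_coprod_diagHom]

theorem rangeSum_one_inr_mul_diagHom : 𝐯 * 𝐝 = 𝐬 := by
  rw [rangeSum_one_mul_rangeSum_one, rangeSum_one_of_bijective bijective_inr_coprod_diagHom]

theorem braidCoeff_one (z : G) (r : k) :
    𝐮 * 𝐯 * 𝐮 + single (z, 1) r * σ (𝐩 * 𝐯) * 𝐩 =
      𝐯 * 𝐮 * 𝐯 + single (1, z⁻¹) r * ρ (𝐰 * 𝐮) * 𝐰 := by
  have hdiag : 𝐮 * 𝐯 * 𝐮 = 𝐯 * 𝐮 * 𝐯 := by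
    rw [rangeSum_one_inl_mul_inr, mul_comm 𝐯, rangeSum_one_inl_mul_inr, rangeSum_one_id_mul,
      rangeSum_one_id_mul]
  -- multiplication by `𝐝` only sees a torus element modulo the diagonal
  have hnorm : ∀ (g : G × G) (t : k), single g t * 𝐝 = single (1, g.1⁻¹ * g.2) t * 𝐝 :=
    fun g t => by
      rw [single_mul_rangeSum_one diagHom g t g.1⁻¹]
      congr 2
      ext <;> simp [diagHom, mul_comm]
  have hmove : ∀ x y w : MonoidAlgebra k (G × G), x * (y * 𝐝) * w = x * (y * w) * 𝐝 :=
    fun _ _ _ => by ring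
  simp only [map_mul, mapDomainRingHom_rangeSum, reflFst_comp_inl, reflFst_comp_inr,
    reflSnd_comp_inl, reflSnd_comp_inr]
  rw [hdiag, add_right_inj, hmove, hmove, rangeSum_mul_rangeSum, rangeSum_mul_rangeSum]
  generalize 𝐝 = D at hnorm ⊢
  simp only [rangeSum, Finset.mul_sum, Finset.sum_mul, single_mul_single]
  rw [← (Equiv.prodComm G G).sum_comp]
  refine Finset.sum_congr rfl fun x _ => ?_
  rw [hnorm, hnorm]
  congr 2
  · ext <;> simp [mul_comm]
  · simp [mul_comm]

theorem braidCoeff_fst (hc : ∑ a, c a = -1) :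
    σ (𝐮 * 𝐯) * 𝐩 + 𝐩 * 𝐯 * 𝐮 + 𝐮 * σ (𝐩 * 𝐯) * 𝐩 = σ 𝐯 * 𝐩 * 𝐯 := by
  have habs : 𝐮 * rangeSum c ((inl G G).comp invMonoidHom) = -𝐮 := by
    rw [rangeSum_one_mul_rangeSum_comp, hc, neg_one_smul]
  have huv : 𝐮 * 𝐯 = 𝐬 := rangeSum_one_inl_mul_inr
  have hvd : 𝐯 * 𝐝 = 𝐬 := rangeSum_one_inr_mul_diagHom
  simp only [map_mul, mapDomainRingHom_rangeSum, reflFst_comp_inl, reflFst_comp_inr,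
    rangeSum_one_comp_invMonoidHom]
  linear_combination (𝐝 * 𝐩) * habs + 𝐩 * huv - 𝐩 * hvd

theorem braidCoeff_snd (hc : ∑ a, c a = -1) :
    ρ 𝐮 * 𝐰 * 𝐮 = ρ (𝐯 * 𝐮) * 𝐰 + 𝐰 * 𝐮 * 𝐯 + 𝐯 * ρ (𝐰 * 𝐮) * 𝐰 := by
  have habs : 𝐯 * rangeSum c ((inr G G).comp invMonoidHom) = -𝐯 := by
    rw [rangeSum_one_mul_rangeSum_comp, hc, neg_one_smul]
  have huv : 𝐮 * 𝐯 = 𝐬 := rangeSum_one_inl_mul_inr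
  have hud : 𝐮 * 𝐝 = 𝐬 := rangeSum_one_inl_mul_diagHom
  simp only [map_mul, mapDomainRingHom_rangeSum, reflSnd_comp_inl, reflSnd_comp_inr,
    rangeSum_one_comp_invMonoidHom]
  linear_combination -(𝐝 * 𝐰) * habs + 𝐰 * hud - 𝐰 * huv

theorem braidCoeff_fst_snd : ρ 𝐩 * 𝐰 * 𝐮 = ρ (σ 𝐯 * 𝐩) * 𝐰 := by
  simp only [map_mul, mapDomainRingHom_rangeSum, reflFst_comp_inr, reflSnd_comp_inl,
    reflSnd_comp_diagHom]
  ring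

theorem braidCoeff_snd_fst : σ (ρ 𝐮 * 𝐰) * 𝐩 = σ 𝐰 * 𝐩 * 𝐯 := by
  simp only [map_mul, mapDomainRingHom_rangeSum, reflFst_comp_inr, reflSnd_comp_inl,
    reflFst_comp_diagHom]
  ring

theorem braidCoeff_fst_snd_fst : σ (ρ 𝐩 * 𝐰) * 𝐩 = ρ (σ 𝐰 * 𝐩) * 𝐰 := by
  simp only [map_mul, mapDomainRingHom_rangeSum, reflFst_comp_inr, reflSnd_comp_inl,
    reflFst_comp_diagHom, reflSnd_comp_diagHom]
  ring

end BraidCoefficients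

section TorusAlgebra
variable {n : ℕ} {F : Type*} [Field F] [DecidableEq F]

def torusPairHom (i j : Fin n) : Fˣ × Fˣ →* TGrp n F := (hElemHom i).coprod (hElemHom j)

theorem torusPairHom_apply (i j : Fin n) (g : Fˣ × Fˣ) :
    torusPairHom i j g = (hElem i g.1 * hElem j g.2 : TGrp n F) := rfl

theorem sAct_torusPairHom_fst {i j : Fin n} (hij : (j : ℕ) = i + 1) (g : Fˣ × Fˣ) :
    sAct i (torusPairHom i j g) = torusPairHom i j (reflFst g) := by
  simp only [torusPairHom_apply, sAct_mul, sAct_hElem_self, sAct_hElem_succ hij, reflFst_apply,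
    hElem_mul, mul_assoc]

theorem sAct_torusPairHom_snd {i j : Fin n} (hij : (j : ℕ) = i + 1) (g : Fˣ × Fˣ) :
    sAct j (torusPairHom i j g) = torusPairHom i j (reflSnd g) := by
  simp only [torusPairHom_apply, sAct_mul, sAct_hElem_self, sAct_succ_hElem hij, reflSnd_apply,
    hElem_mul, mul_assoc]

variable [Fintype F]

def torusAlgHom (i j : Fin n) : MonoidAlgebra ℂ (Fˣ × Fˣ) →ₐ[ℂ] Yok n F :=
  MonoidAlgebra.lift ℂ (Yok n F) (Fˣ × Fˣ) (yokTHom.comp (torusPairHom i j))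

theorem torusAlgHom_single (i j : Fin n) (g : Fˣ × Fˣ) (c : ℂ) :
    torusAlgHom i j (single g c) = c • yokT n F (torusPairHom i j g) :=
  lift_single _ _ _

theorem torusAlgHom_rangeSum_inl (i j : Fin n) (c : Fˣ → ℂ) :
    torusAlgHom i j (rangeSum c (MonoidHom.inl Fˣ Fˣ)) = ∑ a, c a • yokT n F (hElem i a) := by
  simp [rangeSum, torusAlgHom_single, torusPairHom_apply, hElem_one]

theorem torusAlgHom_rangeSum_inr (i j : Fin n) (c : Fˣ → ℂ) :
    torusAlgHom i j (rangeSum c (MonoidHom.inr Fˣ Fˣ)) = ∑ a, c a • yokT n F (hElem j a) := by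
  simp [rangeSum, torusAlgHom_single, torusPairHom_apply, hElem_one]

theorem torusAlgHom_mul_yokR {i j k : Fin n} {τ : Fˣ × Fˣ →* Fˣ × Fˣ}
    (hτ : ∀ g, sAct k (torusPairHom i j g) = torusPairHom i j (τ g))
    (x : MonoidAlgebra ℂ (Fˣ × Fˣ)) :
    torusAlgHom i j x * yokR n F k = yokR n F k * torusAlgHom i j (mapDomainRingHom ℂ τ x) := by
  induction x using MonoidAlgebra.induction_linear with
  | zero => simp
  | add x y hx hy => simp only [map_add, add_mul, mul_add, hx, hy]
  | single g c =>
    simp only [mapDomainRingHom_apply, mapDomain_single, torusAlgHom_single, smul_mul_assoc,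
      mul_smul_comm, yokT_mul_yokR, hτ]

end TorusAlgebra

theorem sum_units_eq_neg_one {F R : Type*} [Field F] [Fintype F] [DecidableEq F] [CommRing R]
    [IsDomain R] (ψ : F → R) (hadd : ∀ a b, ψ (a + b) = ψ a * ψ b) (hne : ∀ a, ψ a ≠ 0)
    (hnt : ∃ a, ψ a ≠ 1) : ∑ a : Fˣ, ψ a = -1 := by
  have hzero : ψ 0 = 1 := by simpa [hne 0] using (hadd 0 0).symm
  let χ : AddChar F R := { toFun := ψ, map_zero_eq_one' := hzero, map_add_eq_mul' := hadd }
  have hsum := χ.sum_eq_zero_of_ne_one (AddChar.ne_one_iff.mpr hnt)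
  rw [Fintype.sum_eq_add_sum_subtype_ne _ 0, AddChar.map_zero_eq_one] at hsum
  rw [Fintype.sum_equiv unitsEquivNeZero (fun a : Fˣ => ψ a) (fun x => χ x) fun _ => rfl]
  linear_combination hsum

section Juyumaya
variable {n : ℕ} {F : Type*} [Field F] [Fintype F] [DecidableEq F] (ψ : F → ℂ)

theorem yokL_eq_torusAlgHom_fst (i j : Fin n) :
    yokL n F ψ i = (Fintype.card F : ℂ)⁻¹ •
      (torusAlgHom i j (rangeSum 1 (MonoidHom.inl Fˣ Fˣ)) +
        yokR n F i * torusAlgHom i j (rangeSum (fun a : Fˣ => ψ a) (MonoidHom.inl Fˣ Fˣ))) := by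
  simp [yokL, yokE, torusAlgHom_rangeSum_inl]

theorem yokL_eq_torusAlgHom_snd (i j : Fin n) :
    yokL n F ψ j = (Fintype.card F : ℂ)⁻¹ •
      (torusAlgHom i j (rangeSum 1 (MonoidHom.inr Fˣ Fˣ)) +
        yokR n F j * torusAlgHom i j (rangeSum (fun a : Fˣ => ψ a) (MonoidHom.inr Fˣ Fˣ))) := by
  simp [yokL, yokE, torusAlgHom_rangeSum_inr]

theorem yokR_mul_self_eq_torusAlgHom_fst (i j : Fin n) :
    yokR n F i * yokR n F i = torusAlgHom i j (single (-1, 1) (Fintype.card F : ℂ)) +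
      yokR n F i * torusAlgHom i j (rangeSum 1 (MonoidHom.inl Fˣ Fˣ)) := by
  simp [yokR_mul_self, yokE, torusAlgHom_rangeSum_inl, torusAlgHom_single, torusPairHom_apply,
    hElem_one]

theorem yokR_mul_self_eq_torusAlgHom_snd (i j : Fin n) :
    yokR n F j * yokR n F j = torusAlgHom i j (single (1, -1) (Fintype.card F : ℂ)) +
      yokR n F j * torusAlgHom i j (rangeSum 1 (MonoidHom.inr Fˣ Fˣ)) := by
  simp [yokR_mul_self, yokE, torusAlgHom_rangeSum_inr, torusAlgHom_single, torusPairHom_apply,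
    hElem_one]

theorem yokL_braid_of_val_eq_succ {i j : Fin n} (hij : (j : ℕ) = i + 1)
    (hψ : ∑ a : Fˣ, ψ a = -1) :
    yokL n F ψ i * yokL n F ψ j * yokL n F ψ i = yokL n F ψ j * yokL n F ψ i * yokL n F ψ j := by
  have hσ := torusAlgHom_mul_yokR (F := F) (sAct_torusPairHom_fst hij)
  have hρ := torusAlgHom_mul_yokR (F := F) (sAct_torusPairHom_snd hij)
  have hbraid : yokR n F i * yokR n F j * yokR n F i = yokR n F j * yokR n F i * yokR n F j :=
    yokR_braid (by unfold Nat.dist; omega)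
  rw [yokL_eq_torusAlgHom_fst ψ i j, yokL_eq_torusAlgHom_snd ψ i j]
  simp only [smul_mul_smul_comm]
  congr 1
  rw [expand_braid_word (torusAlgHom i j) hσ hρ (yokR_mul_self_eq_torusAlgHom_fst i j),
    expand_braid_word (torusAlgHom i j) hρ hσ (yokR_mul_self_eq_torusAlgHom_snd i j),
    braidCoeff_one, inv_neg_one, braidCoeff_fst _ hψ, braidCoeff_snd _ hψ, braidCoeff_fst_snd,
    braidCoeff_snd_fst, braidCoeff_fst_snd_fst, hbraid]
  abel

def yokGens (i : Fin n) : Set (Yok n F) :=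
  insert (yokR n F i) (Set.range fun r => yokT n F (hElem i r))

theorem yokL_mem_adjoin_yokGens (i : Fin n) : yokL n F ψ i ∈ Algebra.adjoin ℂ (yokGens i) := by
  have hR : yokR n F i ∈ Algebra.adjoin ℂ (yokGens i) :=
    Algebra.subset_adjoin (Set.mem_insert _ _)
  have hT : ∀ r, yokT n F (hElem i r) ∈ Algebra.adjoin ℂ (yokGens i) := fun r =>
    Algebra.subset_adjoin (Set.mem_insert_of_mem _ ⟨r, rfl⟩)
  exact Subalgebra.smul_mem _ (add_mem (sum_mem fun r _ => hT r)
    (mul_mem hR (sum_mem fun r _ => Subalgebra.smul_mem _ (hT r) _))) _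

theorem commute_of_mem_yokGens {i j : Fin n} (h : 2 ≤ Nat.dist i j) {x y : Yok n F}
    (hx : x ∈ yokGens i) (hy : y ∈ yokGens j) : Commute x y := by
  rcases hx with rfl | ⟨r, rfl⟩ <;> rcases hy with rfl | ⟨s, rfl⟩
  · exact yokR_comm h
  · exact ((yokT_mul_yokR _ i).trans (by rw [sAct_hElem_of_two_le_dist h])).symm
  · rw [Nat.dist_comm] at h
    exact (yokT_mul_yokR _ j).trans (by rw [sAct_hElem_of_two_le_dist h])
  · exact (yokT_mul _ _).trans (by rw [mul_comm, yokT_mul])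

theorem yokL_commute_of_two_le_dist {i j : Fin n} (h : 2 ≤ Nat.dist i j) :
    Commute (yokL n F ψ i) (yokL n F ψ j) :=
  Algebra.commute_of_mem_adjoin_of_forall_mem_commute (yokL_mem_adjoin_yokGens ψ j) fun _ hy =>
    (Algebra.commute_of_mem_adjoin_of_forall_mem_commute (yokL_mem_adjoin_yokGens ψ i)
      fun _ hx => (commute_of_mem_yokGens h hx hy).symm).symm

end Juyumaya

theorem juyumaya_braid_relations_general (n : ℕ)
    (F : Type) [Field F] [Fintype F] [DecidableEq F]
    (ψ : F → ℂ) (hψadd : ∀ a b, ψ (a + b) = ψ a * ψ b)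
    (hψne : ∀ a, ψ a ≠ 0) (hψnt : ∃ a, ψ a ≠ 1)
    (i j : Fin n) :
    (Nat.dist i j = 1 →
      yokL n F ψ i * yokL n F ψ j * yokL n F ψ i =
        yokL n F ψ j * yokL n F ψ i * yokL n F ψ j) ∧
    (2 ≤ Nat.dist i j →
      yokL n F ψ i * yokL n F ψ j = yokL n F ψ j * yokL n F ψ i) := by
  have hψ : ∑ a : Fˣ, ψ a = -1 := sum_units_eq_neg_one ψ hψadd hψne hψnt
  refine ⟨fun h => ?_, fun h => (yokL_commute_of_two_le_dist ψ h).eq⟩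
  rcases (by unfold Nat.dist at h; omega : (j : ℕ) = i + 1 ∨ (i : ℕ) = j + 1) with hij | hji
  · exact yokL_braid_of_val_eq_succ ψ hij hψ
  · exact (yokL_braid_of_val_eq_succ ψ hji hψ).symm

/-- In the Yokonuma–Hecke algebra, Juyumaya's generators `L_i`
satisfy the braid relations. -/
theorem juyumaya_braid_relations (n : ℕ) (hn : 1 ≤ n)
    (F : Type) [Field F] [Fintype F] [DecidableEq F]
    (ψ : F → ℂ) (hψadd : ∀ a b, ψ (a + b) = ψ a * ψ b)
    (hψne : ∀ a, ψ a ≠ 0) (hψnt : ∃ a, ψ a ≠ 1)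
    (i j : Fin n) :
    (Nat.dist i j = 1 →
      yokL n F ψ i * yokL n F ψ j * yokL n F ψ i =
        yokL n F ψ j * yokL n F ψ i * yokL n F ψ j) ∧
    (2 ≤ Nat.dist i j →
      yokL n F ψ i * yokL n F ψ j = yokL n F ψ j * yokL n F ψ i) :=
  juyumaya_braid_relations_general n F ψ hψadd hψne hψnt i j
end
end
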